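/- Let [A,A] denote the additive subgroup of A generated by all commutators ab − ba (a, b ∈ A); it is an S-submodule of A, where S acts on A through ι and the structure map S → T. Then there are S-module isomorphisms A/[A,A] ≅ T/(π·ker(Tr_{T/S})) ≅ S ⊕ 𝔽_S^{⊕(n−1)}. -/

import Mathlib

/-!
Write `A = ⨁_{i<n} ι(T) xⁱ`. For `0 < i < n` pick `u` with `σⁱu - u` a unit `v` (it exists
because `σ̄ⁱ ≠ 1` on the residue field); then `t xⁱ = [t v⁻¹ xⁱ, u]` is a commutator, and so is
`[x, t xⁿ⁻¹] = π (σt - t)`. Conversely the `x⁰`-coefficient of `[t xⁱ, u xʲ]` vanishes unless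
`i + j = n`, where it is `π (t σⁱu - u σʲt) ∈ π ker Tr`. Hence `[A,A]` is the kernel of the map
`A → T/(π ker Tr)` taking the `x⁰`-coefficient, as soon as `ker Tr ⊆ (σ - 1)T`. This additive
Hilbert 90, the existence of `e` with `Tr e = 1`, and the fact that the fixed points of `σ` are
the scalars hold for the residue field extension, which is cyclic Galois with group `⟨σ̄⟩`, and
lift to `T` by Nakayama. Hence `Tr = τ(·)·1` for a linear form `τ` with `τ e = 1`, so
`T = ker τ ⊕ S e` with `ker τ` free of rank `n - 1`, and `T/(π ker Tr) ≅ S ⊕ (S/π)ⁿ⁻¹`.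
-/

open Pointwise

open Finset Module IsLocalRing

theorem Finset.sum_range_shift_of_eq {M : Type*} [AddCommMonoid M] {f : ℕ → M} {n : ℕ}
    (h : f n = f 0) : ∑ i ∈ range n, f (i + 1) = ∑ i ∈ range n, f i := by
  cases n with
  | zero => simp
  | succ k => rw [sum_range_succ, h, sum_range_succ' f]

theorem Submodule.le_of_le_sup_smul_of_mem_maximalIdeal {R M : Type*} [CommRing R] [IsLocalRing R]
    [IsNoetherianRing R] [AddCommGroup M] [Module R M] [Module.Finite R M]
    {N N' : Submodule R M} {π : R} (hπ : π ∈ maximalIdeal R) (h : N ≤ N' ⊔ π • N) : N ≤ N' := by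
  refine le_of_le_smul_of_le_jacobson_bot (IsNoetherian.noetherian N) (I := Ideal.span {π}) ?_
    (by rwa [ideal_span_singleton_smul])
  rw [jacobson_eq_maximalIdeal ⊥ bot_ne_top, Ideal.span_singleton_le_iff_mem]
  exact hπ

theorem AlgEquiv.mem_ker_toLinearMap_sub_one {R B : Type*} [CommRing R] [Ring B] [Algebra R B]
    (σ : B ≃ₐ[R] B) (b : B) : b ∈ LinearMap.ker (σ.toLinearMap - 1) ↔ σ b = b := by
  simp [sub_eq_zero]

theorem nonempty_quotient_smul_ker_equiv {R M : Type*} [CommRing R] [IsDomain R]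
    [IsPrincipalIdealRing R] [AddCommGroup M] [Module R M] [Module.Free R M] [Module.Finite R M]
    {f : M →ₗ[R] R} (hf : Function.Surjective f) (π : R) :
    Nonempty ((M ⧸ π • LinearMap.ker f) ≃ₗ[R]
      R × (Fin (finrank R M - 1) → R ⧸ Ideal.span {π})) := by
  obtain ⟨e, he⟩ := hf 1
  have hrank : finrank R (LinearMap.ker f) = finrank R M - 1 := by
    rw [← (LinearMap.ker f).finrank_quotient_add_finrank,
      (f.quotKerEquivOfSurjective hf).finrank_eq, finrank_self, Nat.add_sub_cancel_left]
  let b := Module.finBasisOfFinrankEq R (LinearMap.ker f) hrank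
  let pr : M →ₗ[R] LinearMap.ker f := (LinearMap.id - f.smulRight e).codRestrict _ fun m ↦ by
    simp [he]
  have pr_apply : ∀ m, (pr m : M) = m - f m • e := fun m ↦ rfl
  let Ψ : M →ₗ[R] R × (Fin (finrank R M - 1) → R ⧸ Ideal.span {π}) :=
    f.prod (LinearMap.pi (fun i ↦ (Ideal.span {π}).mkQ ∘ₗ b.coord i) ∘ₗ pr)
  have hΨ : ∀ m, Ψ m = (f m, fun i ↦ Ideal.Quotient.mk _ (b.repr (pr m) i)) := fun m ↦ rfl
  have hker : LinearMap.ker Ψ = π • LinearMap.ker f := by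
    ext m
    simp only [LinearMap.mem_ker, hΨ, Prod.mk_eq_zero, funext_iff, Pi.zero_apply,
      Ideal.Quotient.eq_zero_iff_mem, Ideal.mem_span_singleton',
      Submodule.mem_smul_pointwise_iff_exists]
    constructor
    · rintro ⟨hfm, hd⟩
      choose d hd using hd
      refine ⟨∑ i, d i • (b i : M),
        Submodule.sum_mem _ fun i _ ↦ Submodule.smul_mem _ _ (b i).2, ?_⟩
      have hpr : (pr m : M) = m := by rw [pr_apply, hfm, zero_smul, sub_zero]
      rw [← hpr, ← b.sum_repr (pr m)]
      simp [Finset.smul_sum, smul_smul, ← hd, mul_comm]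
    · rintro ⟨k, hk, rfl⟩
      exact ⟨by simp [LinearMap.mem_ker.mp hk], fun i ↦ ⟨b.repr (pr k) i, by simp [mul_comm]⟩⟩
  have hsurj : Function.Surjective Ψ := by
    rintro ⟨r, v⟩
    choose c hc using fun i ↦ Ideal.Quotient.mk_surjective (v i)
    have hpr : pr (r • e + b.equivFun.symm c) = b.equivFun.symm c :=
      Subtype.ext (by simp [pr_apply, he])
    refine ⟨r • e + (b.equivFun.symm c : M), ?_⟩
    rw [hΨ, hpr, ← b.equivFun_apply, b.equivFun.apply_symm_apply]
    exact Prod.ext (by simp [he]) (funext hc)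
  exact ⟨(Submodule.quotEquivOfEq _ _ hker.symm).trans (Ψ.quotKerEquivOfSurjective hsurj)⟩

section CyclicTrace

variable {R B : Type*} [CommSemiring R] [Semiring B] [Algebra R B]

def cyclicTrace (σ : B ≃ₐ[R] B) (n : ℕ) : B →ₗ[R] B := ∑ i ∈ range n, (σ ^ i).toLinearMap

theorem cyclicTrace_apply (σ : B ≃ₐ[R] B) (n : ℕ) (b : B) :
    cyclicTrace σ n b = ∑ i ∈ range n, (σ ^ i) b := by
  simp [cyclicTrace]

variable {σ : B ≃ₐ[R] B} {n : ℕ}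

theorem cyclicTrace_apply_apply (hσ : σ ^ n = 1) (b : B) :
    cyclicTrace σ n (σ b) = cyclicTrace σ n b := by
  simp only [cyclicTrace_apply, ← AlgEquiv.mul_apply, ← pow_succ]
  exact sum_range_shift_of_eq (f := fun i ↦ (σ ^ i) b) (by simp [hσ])

theorem apply_cyclicTrace (hσ : σ ^ n = 1) (b : B) :
    σ (cyclicTrace σ n b) = cyclicTrace σ n b := by
  simp only [cyclicTrace_apply, map_sum, ← AlgEquiv.mul_apply, ← pow_succ']
  exact sum_range_shift_of_eq (f := fun i ↦ (σ ^ i) b) (by simp [hσ])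

theorem cyclicTrace_pow_apply (hσ : σ ^ n = 1) (m : ℕ) (b : B) :
    cyclicTrace σ n ((σ ^ m) b) = cyclicTrace σ n b := by
  induction m with
  | zero => simp
  | succ m ih => rw [pow_succ', AlgEquiv.mul_apply, cyclicTrace_apply_apply hσ, ih]

end CyclicTrace

theorem cyclicTrace_mul_sub_mul_eq_zero {R B : Type*} [CommSemiring R] [CommRing B] [Algebra R B]
    {σ : B ≃ₐ[R] B} {n i j : ℕ} (hσ : σ ^ n = 1) (hij : i + j = n) (t u : B) :
    cyclicTrace σ n (t * (σ ^ i) u - u * (σ ^ j) t) = 0 := by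
  rw [map_sub, sub_eq_zero, ← cyclicTrace_pow_apply hσ i (u * _), map_mul (σ ^ i),
    ← AlgEquiv.mul_apply, ← pow_add, hij, hσ, AlgEquiv.one_apply, mul_comm]

section CyclicGalois

variable {K L : Type*} [Field K] [Field L] [Algebra K L] [FiniteDimensional K L] {τ : Gal(L/K)}

theorem card_algEquiv_eq_finrank_of_orderOf_eq (hτ : orderOf τ = finrank K L) :
    Fintype.card Gal(L/K) = finrank K L :=
  le_antisymm AlgEquiv.card_le (hτ ▸ orderOf_le_card_univ)

theorem isGalois_of_orderOf_eq_finrank (hτ : orderOf τ = finrank K L) : IsGalois K L :=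
  IsGalois.of_card_aut_eq_finrank K L
    (by rw [Nat.card_eq_fintype_card, card_algEquiv_eq_finrank_of_orderOf_eq hτ])

theorem zpowers_eq_top_of_orderOf_eq_finrank (hτ : orderOf τ = finrank K L) :
    Subgroup.zpowers τ = ⊤ :=
  Subgroup.eq_top_of_card_eq _ (by
    rw [Nat.card_zpowers, Nat.card_eq_fintype_card, card_algEquiv_eq_finrank_of_orderOf_eq hτ, hτ])

theorem ker_sub_one_le_range_algebraMap (hτ : orderOf τ = finrank K L) :
    LinearMap.ker (τ.toLinearMap - 1) ≤ LinearMap.range (Algebra.linearMap K L) := by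
  intro z hz
  have hfix : Subgroup.zpowers τ ≤ MulAction.stabilizer Gal(L/K) z := by
    rw [Subgroup.zpowers_le, MulAction.mem_stabilizer_iff]
    simpa [sub_eq_zero] using hz
  have := isGalois_of_orderOf_eq_finrank hτ
  obtain ⟨c, rfl⟩ := (IsGalois.mem_range_algebraMap_iff_fixed z).mpr fun g ↦
    hfix (zpowers_eq_top_of_orderOf_eq_finrank hτ ▸ Subgroup.mem_top g)
  exact ⟨c, rfl⟩

theorem algebraMap_trace_eq_cyclicTrace (hτ : orderOf τ = finrank K L) (z : L) :
    algebraMap K L (Algebra.trace K L z) = cyclicTrace τ (finrank K L) z := by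
  classical
  have := isGalois_of_orderOf_eq_finrank hτ
  have hgen : ∀ g, g ∈ Subgroup.zpowers τ := by
    simp [zpowers_eq_top_of_orderOf_eq_finrank hτ]
  rw [trace_eq_sum_automorphisms, ← IsCyclic.image_range_orderOf hgen,
    sum_image fun i hi j hj h ↦ pow_injOn_Iio_orderOf (by simpa using hi) (by simpa using hj) h,
    hτ, cyclicTrace_apply]

theorem ker_cyclicTrace_eq_range_sub_one (hτ : orderOf τ = finrank K L) :
    LinearMap.ker (cyclicTrace τ (finrank K L)) = LinearMap.range (τ.toLinearMap - 1) := by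
  have hτn : τ ^ finrank K L = 1 := hτ ▸ pow_orderOf_eq_one τ
  have hle : LinearMap.range (τ.toLinearMap - 1) ≤ LinearMap.ker (cyclicTrace τ (finrank K L)) := by
    rintro _ ⟨z, rfl⟩
    simp [cyclicTrace_apply_apply hτn]
  refine (Submodule.eq_of_le_of_finrank_le hle ?_).symm
  have := isGalois_of_orderOf_eq_finrank hτ
  obtain ⟨z, hz⟩ := Algebra.trace_surjective K L 1
  have hrange : 1 ≤ finrank K (LinearMap.range (cyclicTrace τ (finrank K L))) := by
    refine Submodule.one_le_finrank_iff.mpr fun h ↦ ?_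
    have : cyclicTrace τ (finrank K L) z ∈ LinearMap.range (cyclicTrace τ (finrank K L)) :=
      LinearMap.mem_range_self _ z
    simp [h, ← algebraMap_trace_eq_cyclicTrace hτ, hz] at this
  have hfix : finrank K (LinearMap.ker (τ.toLinearMap - 1)) ≤ 1 :=
    (Submodule.finrank_mono (ker_sub_one_le_range_algebraMap hτ)).trans
      (LinearMap.finrank_range_le _ |>.trans (finrank_self K).le)
  have h1 := LinearMap.finrank_range_add_finrank_ker (cyclicTrace τ (finrank K L))
  have h2 := LinearMap.finrank_range_add_finrank_ker (τ.toLinearMap - 1)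
  omega

end CyclicGalois

section ResidueAut

variable {S T : Type*} [CommRing S] [IsLocalRing S] [CommRing T] [Algebra S T]
  [(Ideal.map (algebraMap S T) (maximalIdeal S)).IsMaximal]

local notation "𝔪T" => Ideal.map (algebraMap S T) (maximalIdeal S)

instance : (𝔪T).LiesOver (maximalIdeal S) :=
  ⟨(maximalIdeal.isMaximal S).eq_of_le (Ideal.IsPrime.under S 𝔪T).ne_top Ideal.le_comap_map⟩

noncomputable def residueAut (σ : T ≃ₐ[S] T) : (T ⧸ 𝔪T) ≃ₐ[S ⧸ maximalIdeal S] (T ⧸ 𝔪T) :=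
  Ideal.Quotient.algEquivOfEqMap (maximalIdeal S) σ (by
    rw [← Ideal.map_coe σ, Ideal.map_map]
    congr 1
    ext
    simp)

theorem residueAut_mk (σ : T ≃ₐ[S] T) (t : T) :
    residueAut σ (Ideal.Quotient.mk 𝔪T t) = Ideal.Quotient.mk 𝔪T (σ t) :=
  rfl

theorem residueAut_pow_mk (σ : T ≃ₐ[S] T) (i : ℕ) (t : T) :
    (residueAut σ ^ i) (Ideal.Quotient.mk 𝔪T t) = Ideal.Quotient.mk 𝔪T ((σ ^ i) t) := by
  induction i with
  | zero => simp
  | succ i ih => rw [pow_succ', AlgEquiv.mul_apply, ih, pow_succ', AlgEquiv.mul_apply]; rfl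

theorem mk_cyclicTrace (σ : T ≃ₐ[S] T) (n : ℕ) (t : T) :
    Ideal.Quotient.mk 𝔪T (cyclicTrace σ n t) =
      cyclicTrace (residueAut σ) n (Ideal.Quotient.mk 𝔪T t) := by
  simp [cyclicTrace_apply, residueAut_pow_mk]

theorem orderOf_residueAut {σ : T ≃ₐ[S] T} {n : ℕ} (hn : 0 < n) (hσ : σ ^ n = 1)
    (hgen : ∀ i, 0 < i → i < n → ∃ t, (σ ^ i) t - t ∉ 𝔪T) :
    orderOf (residueAut σ) = n := by
  refine (orderOf_eq_iff hn).mpr ⟨AlgEquiv.ext fun z ↦ ?_, fun i hin hi hσi ↦ ?_⟩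
  · obtain ⟨t, rfl⟩ := Ideal.Quotient.mk_surjective z
    rw [residueAut_pow_mk, hσ, AlgEquiv.one_apply, AlgEquiv.one_apply]
  · obtain ⟨t, ht⟩ := hgen i hi hin
    apply ht
    rw [← Ideal.Quotient.eq, ← residueAut_pow_mk, hσi, AlgEquiv.one_apply]

end ResidueAut

theorem mem_map_maximalIdeal_iff {S T : Type*} [CommRing S] [IsDomain S]
    [IsDiscreteValuationRing S] [CommRing T] [Algebra S T] {π : S} (hπ : Irreducible π) {t : T} :
    t ∈ Ideal.map (algebraMap S T) (maximalIdeal S) ↔ ∃ m : T, t = π • m := by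
  simp_rw [hπ.maximalIdeal_eq, Ideal.map_span, Set.image_singleton, Ideal.mem_span_singleton',
    Algebra.smul_def, mul_comm (algebraMap S T π), eq_comm]

section Unramified

variable {S T : Type*} [CommRing S] [IsDomain S] [IsDiscreteValuationRing S]
  [CommRing T] [Algebra S T] [Module.Free S T] [Module.Finite S T]
  [(Ideal.map (algebraMap S T) (maximalIdeal S)).IsMaximal] {π : S}

local notation "𝔪T" => Ideal.map (algebraMap S T) (maximalIdeal S)

attribute [local instance] Ideal.Quotient.field

theorem ker_sub_one_le_range_algebraMap_of_residue (hπ : Irreducible π) {σ : T ≃ₐ[S] T}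
    (hσ : orderOf (residueAut σ) = finrank S T) :
    LinearMap.ker (σ.toLinearMap - 1) ≤ LinearMap.range (Algebra.linearMap S T) := by
  have hπm : π ∈ maximalIdeal S := hπ.maximalIdeal_eq ▸ Ideal.mem_span_singleton_self π
  refine Submodule.le_of_le_sup_smul_of_mem_maximalIdeal hπm fun f hf ↦ ?_
  rw [AlgEquiv.mem_ker_toLinearMap_sub_one] at hf
  have hσ' : orderOf (residueAut σ) = finrank (S ⧸ maximalIdeal S) (T ⧸ 𝔪T) :=
    hσ.trans finrank_quotient_map.symm
  have h1 : Ideal.Quotient.mk 𝔪T f ∈ LinearMap.ker ((residueAut σ).toLinearMap - 1) := by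
    rw [AlgEquiv.mem_ker_toLinearMap_sub_one, residueAut_mk, hf]
  obtain ⟨c', hc'⟩ := ker_sub_one_le_range_algebraMap hσ' h1
  obtain ⟨c, rfl⟩ := Ideal.Quotient.mk_surjective c'
  obtain ⟨m, hm⟩ := (mem_map_maximalIdeal_iff hπ).mp <| Ideal.Quotient.eq.mp hc'.symm
  have hσm : σ m = m := by
    rw [← smul_right_inj hπ.ne_zero, ← map_smul, ← hm, map_sub, hf, AlgEquiv.commutes]
  rw [← sub_add_cancel f (algebraMap S T c), hm, add_comm]
  exact Submodule.add_mem_sup ⟨c, rfl⟩ (Submodule.smul_mem_pointwise_smul _ _ _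
    ((AlgEquiv.mem_ker_toLinearMap_sub_one _ _).mpr hσm))

theorem exists_cyclicTrace_eq_one (hπ : Irreducible π) {σ : T ≃ₐ[S] T}
    (hσn : σ ^ finrank S T = 1) (hσ : orderOf (residueAut σ) = finrank S T) :
    ∃ e : T, cyclicTrace σ (finrank S T) e = 1 := by
  have hσ' : orderOf (residueAut σ) = finrank (S ⧸ maximalIdeal S) (T ⧸ 𝔪T) :=
    hσ.trans finrank_quotient_map.symm
  have := isGalois_of_orderOf_eq_finrank hσ'
  obtain ⟨z, hz⟩ := Algebra.trace_surjective (S ⧸ maximalIdeal S) (T ⧸ 𝔪T) 1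
  obtain ⟨t, rfl⟩ := Ideal.Quotient.mk_surjective z
  obtain ⟨s, hs⟩ := ker_sub_one_le_range_algebraMap_of_residue hπ hσ <|
    (AlgEquiv.mem_ker_toLinearMap_sub_one _ _).mpr (apply_cyclicTrace hσn t)
  have hs1 : Ideal.Quotient.mk (maximalIdeal S) s = 1 := by
    apply FaithfulSMul.algebraMap_injective (S ⧸ maximalIdeal S) (T ⧸ 𝔪T)
    rw [map_one, Ideal.Quotient.algebraMap_quotient_map_quotient, ← Algebra.linearMap_apply, hs,
      mk_cyclicTrace, ← hσ, hσ', ← algebraMap_trace_eq_cyclicTrace hσ', hz, map_one]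
  obtain ⟨u, rfl⟩ : IsUnit s := by
    rw [← IsLocalRing.notMem_maximalIdeal, ← Ideal.Quotient.eq_zero_iff_mem, hs1]
    exact one_ne_zero
  refine ⟨Units.val u⁻¹ • t, ?_⟩
  rw [map_smul, ← hs, Algebra.linearMap_apply, Algebra.smul_def, ← map_mul, Units.inv_mul, map_one]

theorem ker_cyclicTrace_le_range_sub_one (hπ : Irreducible π) {σ : T ≃ₐ[S] T}
    (hσn : σ ^ finrank S T = 1) (hσ : orderOf (residueAut σ) = finrank S T) :
    LinearMap.ker (cyclicTrace σ (finrank S T)) ≤ LinearMap.range (σ.toLinearMap - 1) := by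
  have hπm : π ∈ maximalIdeal S := hπ.maximalIdeal_eq ▸ Ideal.mem_span_singleton_self π
  refine Submodule.le_of_le_sup_smul_of_mem_maximalIdeal hπm fun k hk ↦ ?_
  rw [LinearMap.mem_ker] at hk
  have hσ' : orderOf (residueAut σ) = finrank (S ⧸ maximalIdeal S) (T ⧸ 𝔪T) :=
    hσ.trans finrank_quotient_map.symm
  have h1 : Ideal.Quotient.mk 𝔪T k ∈
      LinearMap.ker (cyclicTrace (residueAut σ) (finrank (S ⧸ maximalIdeal S) (T ⧸ 𝔪T))) := by
    rw [LinearMap.mem_ker, ← hσ', hσ, ← mk_cyclicTrace, hk, map_zero]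
  obtain ⟨w, hw⟩ := ker_cyclicTrace_eq_range_sub_one hσ' ▸ h1
  obtain ⟨t, rfl⟩ := Ideal.Quotient.mk_surjective w
  have hw' : Ideal.Quotient.mk 𝔪T (σ t - t) = Ideal.Quotient.mk 𝔪T k := by
    simpa [residueAut_mk] using hw
  obtain ⟨m, hm⟩ := (mem_map_maximalIdeal_iff hπ).mp <| Ideal.Quotient.eq.mp hw'.symm
  have hTrm : cyclicTrace σ (finrank S T) m = 0 := by
    rw [← smul_right_inj hπ.ne_zero, ← map_smul, ← hm, map_sub, map_sub, hk,
      cyclicTrace_apply_apply hσn, sub_self, sub_zero, smul_zero]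
  rw [← sub_add_cancel k (σ t - t), hm, add_comm]
  exact Submodule.add_mem_sup ⟨t, rfl⟩ (Submodule.smul_mem_pointwise_smul _ _ _ hTrm)

theorem exists_surjective_ker_eq_ker_cyclicTrace (hπ : Irreducible π) {σ : T ≃ₐ[S] T}
    (hσn : σ ^ finrank S T = 1) (hσ : orderOf (residueAut σ) = finrank S T) :
    ∃ τ : T →ₗ[S] S, Function.Surjective τ ∧
      LinearMap.ker τ = LinearMap.ker (cyclicTrace σ (finrank S T)) := by
  have : Nontrivial T :=
    (Ideal.Quotient.mk_surjective (I := Ideal.map (algebraMap S T) (maximalIdeal S))).nontrivial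
  have hinj : Function.Injective (algebraMap S T) := FaithfulSMul.algebraMap_injective S T
  let τ := (LinearEquiv.ofInjective (Algebra.linearMap S T) hinj).symm.toLinearMap ∘ₗ
    (cyclicTrace σ (finrank S T)).codRestrict _ fun t ↦
      ker_sub_one_le_range_algebraMap_of_residue hπ hσ <|
        (AlgEquiv.mem_ker_toLinearMap_sub_one _ _).mpr (apply_cyclicTrace hσn t)
  have hτ : ∀ t, algebraMap S T (τ t) = cyclicTrace σ (finrank S T) t := fun t ↦
    congrArg Subtype.val ((LinearEquiv.ofInjective (Algebra.linearMap S T) hinj).apply_symm_apply _)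
  obtain ⟨e, he⟩ := exists_cyclicTrace_eq_one hπ hσn hσ
  refine ⟨τ, fun s ↦ ⟨s • e, hinj ?_⟩, ?_⟩
  · rw [map_smul, smul_eq_mul, map_mul, hτ, he, mul_one]
  · ext t
    rw [LinearMap.mem_ker, LinearMap.mem_ker, ← hτ, map_eq_zero_iff _ hinj]

end Unramified

def ringCommutators (A : Type*) [Ring A] : Set A := {y | ∃ a b : A, y = a * b - b * a}

theorem coe_span_ringCommutators (R A : Type*) [CommRing R] [Ring A] [Algebra R A] :
    (Submodule.span R (ringCommutators A) : Set A) = AddSubgroup.closure (ringCommutators A) := by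
  apply le_antisymm
  · have hsmul : (Set.univ : Set R) • ringCommutators A ⊆ ringCommutators A := by
      rintro _ ⟨r, -, _, ⟨a, b, rfl⟩, rfl⟩
      exact ⟨r • a, b, by simp only [smul_sub, smul_mul_assoc, mul_smul_comm]⟩
    rw [← Submodule.coe_toAddSubmonoid, Submodule.span_eq_closure]
    exact (AddSubmonoid.closure_mono hsmul).trans
      (AddSubmonoid.closure_le.mpr AddSubgroup.subset_closure)
  · exact (AddSubgroup.closure_le (Submodule.span R _).toAddSubgroup).mpr Submodule.subset_span

namespace CyclicAlgebra

variable {S T A : Type*} [CommRing S] [CommRing T] [Algebra S T] [Ring A] [Algebra S A]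
  {σ : T ≃ₐ[S] T} {ι : T →ₐ[S] A} {x : A} {n : ℕ} {π : S}

theorem pow_mul_of_mul_eq (hx : ∀ t, x * ι t = ι (σ t) * x) (m : ℕ) (t : T) :
    x ^ m * ι t = ι ((σ ^ m) t) * x ^ m := by
  induction m with
  | zero => simp
  | succ m ih =>
    rw [pow_succ', mul_assoc, ih, ← mul_assoc, hx, mul_assoc, pow_succ' σ, AlgEquiv.mul_apply]

theorem monomial_mul_monomial (hx : ∀ t, x * ι t = ι (σ t) * x) (t u : T) (i j : ℕ) :
    ι t * x ^ i * (ι u * x ^ j) = ι (t * (σ ^ i) u) * x ^ (i + j) := by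
  rw [mul_assoc, ← mul_assoc (x ^ i), pow_mul_of_mul_eq hx, mul_assoc, ← mul_assoc, ← map_mul,
    ← pow_add]

theorem monomial_mem_ringCommutators (hx : ∀ t, x * ι t = ι (σ t) * x) {i : ℕ} {u : T}
    (hu : IsUnit ((σ ^ i) u - u)) (t : T) : ι t * x ^ i ∈ ringCommutators A := by
  obtain ⟨w, hw⟩ := hu.exists_right_inv
  refine ⟨ι (t * w) * x ^ i, ι u, ?_⟩
  rw [mul_assoc, pow_mul_of_mul_eq hx, ← mul_assoc, ← mul_assoc, ← map_mul, ← map_mul, ← sub_mul,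
    ← map_sub]
  congr 2
  linear_combination -t * hw

theorem smul_sub_mem_ringCommutators (hx : ∀ t, x * ι t = ι (σ t) * x) (hn : 0 < n)
    (hxn : x ^ n = algebraMap S A π) (t : T) :
    ι (π • (σ t - t)) ∈ ringCommutators A := by
  refine ⟨x, ι t * x ^ (n - 1), ?_⟩
  rw [← mul_assoc, hx, mul_assoc, mul_assoc, ← pow_succ', ← pow_succ, Nat.sub_add_cancel hn, hxn,
    ← sub_mul, ← map_sub, map_smul, Algebra.smul_def, Algebra.commutes]

variable (ι x n) in
def monomialSum : (Fin n → T) →ₗ[S] A :=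
  ∑ i : Fin n, LinearMap.mulRight S (x ^ (i : ℕ)) ∘ₗ ι.toLinearMap ∘ₗ LinearMap.proj i

theorem monomialSum_apply (c : Fin n → T) :
    monomialSum ι x n c = ∑ i : Fin n, ι (c i) * x ^ (i : ℕ) := by
  simp [monomialSum]

theorem monomialSum_single (k : Fin n) (t : T) :
    monomialSum ι x n (Pi.single k t) = ι t * x ^ (k : ℕ) := by
  rw [monomialSum_apply, Finset.sum_eq_single k (fun i _ hi ↦ by simp [hi]) (by simp),
    Pi.single_eq_same]

variable [NeZero n]

noncomputable def constCoeff (h : Function.Bijective (monomialSum ι x n)) : A →ₗ[S] T :=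
  LinearMap.proj 0 ∘ₗ (LinearEquiv.ofBijective _ h).symm.toLinearMap

variable (h : Function.Bijective (monomialSum ι x n))

theorem constCoeff_monomialSum (c : Fin n → T) : constCoeff h (monomialSum ι x n c) = c 0 := by
  change (LinearEquiv.ofBijective _ h).symm (LinearEquiv.ofBijective _ h c) 0 = c 0
  rw [LinearEquiv.symm_apply_apply]

theorem constCoeff_monomial {k : ℕ} (hk : k < n) (t : T) :
    constCoeff h (ι t * x ^ k) = if k = 0 then t else 0 := by
  rw [← monomialSum_single ⟨k, hk⟩ (n := n), constCoeff_monomialSum]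
  split_ifs with hk0
  · subst hk0; exact Pi.single_eq_same _ _
  · exact Pi.single_eq_of_ne (fun h ↦ hk0 (congrArg Fin.val h).symm) _

theorem constCoeff_monomial_add (hxn : x ^ n = algebraMap S A π) {k : ℕ} (hk : k < n) (t : T) :
    constCoeff h (ι t * x ^ (n + k)) = if k = 0 then π • t else 0 := by
  rw [pow_add, hxn, ← mul_assoc, ← Algebra.commutes, ← Algebra.smul_def, ← map_smul,
    constCoeff_monomial h hk]

theorem constCoeff_monomial_mem (hxn : x ^ n = algebraMap S A π) {k : ℕ} (hk : k < 2 * n)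
    {v : T} (h0 : k = 0 → v = 0) (hn : k = n → cyclicTrace σ n v = 0) :
    constCoeff h (ι v * x ^ k) ∈ π • LinearMap.ker (cyclicTrace σ n) := by
  rcases lt_or_ge k n with hkn | hkn
  · rw [constCoeff_monomial h hkn]
    split_ifs with hk0
    · rw [h0 hk0]
      exact zero_mem _
    · exact zero_mem _
  · obtain ⟨k, rfl⟩ := Nat.exists_eq_add_of_le hkn
    rw [constCoeff_monomial_add h hxn (by omega)]
    split_ifs with hk0
    · exact Submodule.smul_mem_pointwise_smul _ _ _ (hn (by omega))
    · exact zero_mem _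

theorem constCoeff_mem_of_mem_span (hσ : σ ^ n = 1) (hxn : x ^ n = algebraMap S A π)
    (hx : ∀ t, x * ι t = ι (σ t) * x) {a : A} (ha : a ∈ Submodule.span S (ringCommutators A)) :
    constCoeff h a ∈ π • LinearMap.ker (cyclicTrace σ n) := by
  have hmono : ∀ (i j : Fin n) (t u : T), constCoeff h (ι t * x ^ (i : ℕ) * (ι u * x ^ (j : ℕ)) -
      ι u * x ^ (j : ℕ) * (ι t * x ^ (i : ℕ))) ∈ π • LinearMap.ker (cyclicTrace σ n) := by
    intro i j t u
    rw [monomial_mul_monomial hx, monomial_mul_monomial hx, add_comm (j : ℕ), ← sub_mul,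
      ← map_sub]
    refine constCoeff_monomial_mem h hxn (by omega) (fun h0 ↦ ?_)
      (fun hij ↦ cyclicTrace_mul_sub_mul_eq_zero hσ hij t u)
    simp [show (i : ℕ) = 0 by omega, show (j : ℕ) = 0 by omega, mul_comm]
  suffices ringCommutators A ⊆ (π • LinearMap.ker (cyclicTrace σ n)).comap (constCoeff h) from
    Submodule.span_le.mpr this ha
  rintro _ ⟨a, b, rfl⟩
  obtain ⟨c, rfl⟩ := h.2 a
  obtain ⟨d, rfl⟩ := h.2 b
  rw [SetLike.mem_coe, Submodule.mem_comap, monomialSum_apply, monomialSum_apply,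
    sum_mul_sum, sum_mul_sum,
    sum_comm (f := fun i j : Fin n ↦ ι (d i) * x ^ (i : ℕ) * (ι (c j) * x ^ (j : ℕ)))]
  simp only [← sum_sub_distrib, map_sum]
  exact Submodule.sum_mem _ fun i _ ↦ Submodule.sum_mem _ fun j _ ↦ hmono i j _ _

theorem mem_span_of_constCoeff_mem (hxn : x ^ n = algebraMap S A π)
    (hx : ∀ t, x * ι t = ι (σ t) * x)
    (hker : LinearMap.ker (cyclicTrace σ n) ≤ LinearMap.range (σ.toLinearMap - 1))
    (hunit : ∀ i, 0 < i → i < n → ∃ u, IsUnit ((σ ^ i) u - u)) {a : A}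
    (ha : constCoeff h a ∈ π • LinearMap.ker (cyclicTrace σ n)) :
    a ∈ Submodule.span S (ringCommutators A) := by
  obtain ⟨c, rfl⟩ := h.2 a
  rw [constCoeff_monomialSum, Submodule.mem_smul_pointwise_iff_exists] at ha
  obtain ⟨_, hk, hck⟩ := ha
  obtain ⟨t, rfl⟩ := hker hk
  rw [monomialSum_apply]
  refine Submodule.sum_mem _ fun i _ ↦ Submodule.subset_span ?_
  rcases (i : ℕ).eq_zero_or_pos with hi | hi
  · obtain rfl : i = 0 := Fin.ext hi
    rw [← hck, Fin.val_zero, pow_zero, mul_one]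
    exact smul_sub_mem_ringCommutators hx (NeZero.pos n) hxn t
  · obtain ⟨u, hu⟩ := hunit i hi i.2
    exact monomial_mem_ringCommutators hx hu _

theorem nonempty_quotient_span_ringCommutators_equiv
    (h : Function.Bijective (monomialSum ι x n)) (hσ : σ ^ n = 1)
    (hxn : x ^ n = algebraMap S A π) (hx : ∀ t, x * ι t = ι (σ t) * x)
    (hker : LinearMap.ker (cyclicTrace σ n) ≤ LinearMap.range (σ.toLinearMap - 1))
    (hunit : ∀ i, 0 < i → i < n → ∃ u, IsUnit ((σ ^ i) u - u)) :
    Nonempty ((A ⧸ Submodule.span S (ringCommutators A)) ≃ₗ[S]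
      T ⧸ π • LinearMap.ker (cyclicTrace σ n)) := by
  let F := (π • LinearMap.ker (cyclicTrace σ n)).mkQ ∘ₗ constCoeff h
  have hF : Submodule.span S (ringCommutators A) = LinearMap.ker F := by
    ext a
    simp only [F, LinearMap.mem_ker, LinearMap.comp_apply, Submodule.mkQ_apply,
      Submodule.Quotient.mk_eq_zero]
    exact ⟨constCoeff_mem_of_mem_span h hσ hxn hx, mem_span_of_constCoeff_mem h hxn hx hker hunit⟩
  have hsurj : Function.Surjective F := (Submodule.mkQ_surjective _).comp fun t ↦
    ⟨monomialSum ι x n (Pi.single 0 t), by rw [constCoeff_monomialSum, Pi.single_eq_same]⟩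
  exact ⟨(Submodule.quotEquivOfEq _ _ hF).trans (F.quotKerEquivOfSurjective hsurj)⟩

end CyclicAlgebra

theorem statement12_general
    (S : Type*) [CommRing S] [IsDomain S] [IsDiscreteValuationRing S]
    (π : S) (hπ : Irreducible π)
    (T : Type*) [CommRing T] [IsDomain T] [IsDiscreteValuationRing T]
    [Algebra S T] [Module.Free S T]
    (n : ℕ) (hn : 1 ≤ n) (hrank : Module.finrank S T = n)
    (hmax : IsLocalRing.maximalIdeal T = Ideal.span {algebraMap S T π})
    (σ : T ≃ₐ[S] T) (hσn : σ ^ n = 1)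
    (hgen : ∀ i : ℕ, 0 < i → i < n →
      ∃ t : T, (σ ^ i) t - t ∉ Ideal.span {algebraMap S T π}) 
    (A : Type*) [Ring A] [Algebra S A]
    (ι : T →+* A)
    (hcomp : ∀ s : S, algebraMap S A s = ι (algebraMap S T s))
    (x : A) (hx : x ^ n = ι (algebraMap S T π))
    (hcommute : ∀ t : T, x * ι t = ι (σ t) * x)
    (hbasis : ∀ a : A, ∃! c : Fin n → T, a = ∑ i : Fin n, ι (c i) * x ^ (i : ℕ)) :
    (Submodule.span S {y : A | ∃ a b : A, y = a * b - b * a} : Set A) =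
      (AddSubgroup.closure {y : A | ∃ a b : A, y = a * b - b * a} : Set A) ∧
    Nonempty ((A ⧸ Submodule.span S {y : A | ∃ a b : A, y = a * b - b * a}) ≃ₗ[S]
      T ⧸ (π • LinearMap.ker (∑ i ∈ Finset.range n, (σ ^ i).toLinearMap))) ∧
    Nonempty ((A ⧸ Submodule.span S {y : A | ∃ a b : A, y = a * b - b * a}) ≃ₗ[S]
      S × (Fin (n - 1) → S ⧸ Ideal.span {π})) := by
  subst hrank
  have : Module.Finite S T := Module.finite_of_finrank_pos hn
  have : NeZero (finrank S T) := ⟨by omega⟩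
  have hP : Ideal.map (algebraMap S T) (maximalIdeal S) = maximalIdeal T := by
    rw [hπ.maximalIdeal_eq, Ideal.map_span, Set.image_singleton, hmax]
  have : (Ideal.map (algebraMap S T) (maximalIdeal S)).IsMaximal := hP ▸ maximalIdeal.isMaximal T
  rw [← hmax, ← hP] at hgen
  have horder : orderOf (residueAut σ) = finrank S T := orderOf_residueAut hn hσn hgen
  have hunit : ∀ i, 0 < i → i < finrank S T → ∃ u, IsUnit ((σ ^ i) u - u) := fun i hi hin ↦
    (hgen i hi hin).imp fun u hu ↦ by
      rwa [hP, IsLocalRing.mem_maximalIdeal, mem_nonunits_iff, not_not] at hu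
  let ιₐ : T →ₐ[S] A := { ι with commutes' := fun s ↦ (hcomp s).symm }
  have hιₐ : ∀ t, ιₐ t = ι t := fun _ ↦ rfl
  have hΦ : Function.Bijective (CyclicAlgebra.monomialSum ιₐ x (finrank S T)) :=
    Function.bijective_iff_existsUnique _ |>.mpr fun a ↦ by
      simpa only [CyclicAlgebra.monomialSum_apply, hιₐ, eq_comm] using hbasis a
  obtain ⟨e₁⟩ := CyclicAlgebra.nonempty_quotient_span_ringCommutators_equiv hΦ hσn
    (hx.trans (hcomp π).symm) hcommute (ker_cyclicTrace_le_range_sub_one hπ hσn horder) hunit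
  obtain ⟨τ, hτ, hker⟩ := exists_surjective_ker_eq_ker_cyclicTrace hπ hσn horder
  obtain ⟨e₂⟩ := nonempty_quotient_smul_ker_equiv hτ π
  exact ⟨coe_span_ringCommutators S A, ⟨e₁⟩,
    ⟨e₁.trans ((Submodule.quotEquivOfEq _ _ (by rw [hker])).trans e₂)⟩⟩

/-- In the unramified setting (`S` a complete DVR with uniformizer `π` and
finite residue field `𝔽_S = S/(π)`, `T` an `S`-algebra DVR, finite free of rank `n ≥ 1` over
`S` with maximal ideal generated by the image of `π`, and `σ` an `S`-algebra automorphism with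
`σ ^ n = 1` whose reduction mod `π` generates the Galois group of the residue extension), let
`A` be an associative unital ring with an injective ring homomorphism `ι : T → A` and an
element `x ∈ A` with `x^n = ι π`, `x · ι t = ι (σ t) · x`, and `1, x, …, x^(n-1)` a basis of
`A` as a left `T`-module; `S` acts on `A` through `ι` and the structure map `S → T`.  Then the
additive subgroup `[A,A]` generated by commutators is an `S`-submodule of `A` (i.e. the
`S`-span of the commutators coincides with their additive closure), and there are `S`-module
isomorphisms `A/[A,A] ≅ T/(π · ker Tr) ≅ S ⊕ 𝔽_S^(n-1)`. -/
theorem statement12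
    (S : Type*) [CommRing S] [IsDomain S] [IsDiscreteValuationRing S]
    (π : S) (hπ : Irreducible π)
    [IsAdicComplete (Ideal.span {π}) S] [Finite (S ⧸ Ideal.span {π})]
    (T : Type*) [CommRing T] [IsDomain T] [IsDiscreteValuationRing T]
    [Algebra S T] [Module.Free S T]
    (n : ℕ) (hn : 1 ≤ n) (hrank : Module.finrank S T = n)
    (hmax : IsLocalRing.maximalIdeal T = Ideal.span {algebraMap S T π})
    (σ : T ≃ₐ[S] T) (hσn : σ ^ n = 1)
    (hgen : ∀ i : ℕ, 0 < i → i < n →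
      ∃ t : T, (σ ^ i) t - t ∉ Ideal.span {algebraMap S T π}) 
    (A : Type*) [Ring A] [Algebra S A]
    (ι : T →+* A) (hι : Function.Injective ι)
    (hcomp : ∀ s : S, algebraMap S A s = ι (algebraMap S T s))
    (x : A) (hx : x ^ n = ι (algebraMap S T π))
    (hcommute : ∀ t : T, x * ι t = ι (σ t) * x)
    (hbasis : ∀ a : A, ∃! c : Fin n → T, a = ∑ i : Fin n, ι (c i) * x ^ (i : ℕ)) :
    (Submodule.span S {y : A | ∃ a b : A, y = a * b - b * a} : Set A) =
      (AddSubgroup.closure {y : A | ∃ a b : A, y = a * b - b * a} : Set A) ∧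
    Nonempty ((A ⧸ Submodule.span S {y : A | ∃ a b : A, y = a * b - b * a}) ≃ₗ[S]
      T ⧸ (π • LinearMap.ker (∑ i ∈ Finset.range n, (σ ^ i).toLinearMap))) ∧
    Nonempty ((A ⧸ Submodule.span S {y : A | ∃ a b : A, y = a * b - b * a}) ≃ₗ[S]
      S × (Fin (n - 1) → S ⧸ Ideal.span {π})) :=
  statement12_general S π hπ T n hn hrank hmax σ hσn hgen A ι hcomp x hx hcommute hbasis
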